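/- Let n ≥ 1, 1 ≤ p < ∞, let g : S^n → ℝ be continuous and let 0 < δ < π. Then lim_{t → ∞} t^n ∫_{S^n} ∫_{S^n \ C(−x,δ)} |g(x)−g(−x)|^p / d̃(x,y)^{n−tp} dH^n(y) dH^n(x) = 0 and lim_{t → ∞} t^n ∫_{S^n} ∫_{S^n \ C(−x,δ)} |g(x)−g(y)|^p / d̃(x,y)^{n−tp} dH^n(y) dH^n(x) = 0; i.e. in the limit the inner integrals concentrate at the antipode −x. -/

import Mathlib

/-!
Off the cap `C(-x, δ)` one has `d(x, y) = π - d(-x, y) ≤ π - δ`, so for `t p ≥ n` the kernel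
`d̃(x, y) ^ (t p - n)` is at most `θ ^ (t p - n)` with `θ = 1 - δ / π < 1`. The numerators are
bounded on the compact set `S^n × S^n` and `H^n(S^n) < ∞`, so both double integrals are
`O(θ ^ (t p))`, which beats `t ^ n`.

`H^n(S^n)` is finite because the radial projection `x ↦ x / ‖x‖`, which is 2-Lipschitz outside the
open unit ball, maps the `2 (n + 1)` faces of the cube `[-1, 1]^(n+1)` onto `S^n`, and each face
is isometric to the cube `[-1, 1]^n`.
-/

open MeasureTheory Metric Filter
open scoped ENNReal NNReal Topology RealInnerProductSpace

noncomputable section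

/-- The unit sphere `S^n ⊆ ℝ^(n+1)`. -/
def Sph (n : ℕ) : Set (EuclideanSpace ℝ (Fin (n+1))) := Metric.sphere 0 1

/-- The geodesic distance `d(x,y) = arccos (x ⬝ y)` on the sphere. -/
def geoDist {n : ℕ} (x y : EuclideanSpace ℝ (Fin (n+1))) : ℝ := Real.arccos ⟪x, y⟫

/-- The normalized geodesic distance `d̃(x,y) = d(x,y)/π ∈ [0,1]`. -/
def nGeoDist {n : ℕ} (x y : EuclideanSpace ℝ (Fin (n+1))) : ℝ := geoDist x y / Real.pi

/-- The open spherical cap `C(v,r) = {w ∈ S^n : d(v,w) < r}`. -/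
def sphCap {n : ℕ} (v : EuclideanSpace ℝ (Fin (n+1))) (r : ℝ) :
    Set (EuclideanSpace ℝ (Fin (n+1))) := {w ∈ Sph n | geoDist v w < r}

/-- `n`-dimensional Hausdorff measure restricted to the sphere `S^n`. -/
def sphMeasure (n : ℕ) : Measure (EuclideanSpace ℝ (Fin (n+1))) :=
  (μH[n]).restrict (Sph n)

/-- The constant `c_{n,p} = H^{n-1}(S^{n-1}) · π^n · (n-1)! / p^n`. -/
def cnp (n : ℕ) (p : ℝ) : ℝ :=
  (μH[n-1] (Metric.sphere (0 : EuclideanSpace ℝ (Fin n)) 1)).toReal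
    * Real.pi ^ n * (Nat.factorial (n-1)) / p ^ n

lemma lipschitzOnWith_inv_norm_smul (E : Type*) [NormedAddCommGroup E] [NormedSpace ℝ E] :
    LipschitzOnWith 2 (fun x : E => ‖x‖⁻¹ • x) {x | 1 ≤ ‖x‖} := by
  refine LipschitzOnWith.of_dist_le_mul fun x (hx : 1 ≤ ‖x‖) y (hy : 1 ≤ ‖y‖) => ?_
  have hx0 : 0 < ‖x‖ := one_pos.trans_le hx
  have hy0 : 0 < ‖y‖ := one_pos.trans_le hy
  have hsplit : ‖x‖⁻¹ • x - ‖y‖⁻¹ • y = ‖x‖⁻¹ • (x - y) + (‖x‖⁻¹ - ‖y‖⁻¹) • y := by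
    rw [smul_sub, sub_smul]; abel
  have hscale : |‖x‖⁻¹ - ‖y‖⁻¹| * ‖y‖ ≤ ‖x - y‖ := by
    rw [inv_sub_inv hx0.ne' hy0.ne', abs_div, abs_mul, abs_of_pos hx0, abs_of_pos hy0,
      div_mul_eq_mul_div, div_le_iff₀ (by positivity), abs_sub_comm]
    nlinarith [mul_le_mul_of_nonneg_right (abs_norm_sub_norm_le x y) hy0.le,
      mul_nonneg (sub_nonneg.2 hx) (mul_nonneg (norm_nonneg (x - y)) hy0.le)]
  rw [dist_eq_norm, dist_eq_norm, hsplit]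
  calc ‖‖x‖⁻¹ • (x - y) + (‖x‖⁻¹ - ‖y‖⁻¹) • y‖
      ≤ ‖x‖⁻¹ * ‖x - y‖ + |‖x‖⁻¹ - ‖y‖⁻¹| * ‖y‖ := by
        refine (norm_add_le _ _).trans_eq ?_
        rw [norm_smul, norm_smul, Real.norm_eq_abs, Real.norm_eq_abs, abs_of_pos (inv_pos.2 hx0)]
    _ ≤ 1 * ‖x - y‖ + ‖x - y‖ := by
        gcongr
        exact inv_le_one_of_one_le₀ hx
    _ = (2 : ℝ≥0) * ‖x - y‖ := by push_cast; ring

section CubeFaces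

variable {n : ℕ}

def cubeFace (i : Fin (n+1)) (s : ℝ) (v : EuclideanSpace ℝ (Fin n)) :
    EuclideanSpace ℝ (Fin (n+1)) :=
  WithLp.toLp 2 (i.insertNth s (WithLp.ofLp v))

lemma isometry_cubeFace (i : Fin (n+1)) (s : ℝ) : Isometry (cubeFace i s) := by
  refine Isometry.of_dist_eq fun v w => ?_
  simp [EuclideanSpace.dist_eq, cubeFace, Fin.sum_univ_succAbove _ i]

lemma one_le_norm_cubeFace (i : Fin (n+1)) {s : ℝ} (hs : 1 ≤ |s|)
    (v : EuclideanSpace ℝ (Fin n)) : 1 ≤ ‖cubeFace i s v‖ := by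
  refine hs.trans ?_
  simpa [cubeFace] using PiLp.norm_apply_le (cubeFace i s v) i

def unitCube (n : ℕ) : Set (EuclideanSpace ℝ (Fin n)) :=
  WithLp.toLp 2 '' Set.univ.pi fun _ => Set.Icc (-1) 1

lemma isCompact_unitCube (n : ℕ) : IsCompact (unitCube n) :=
  (isCompact_univ_pi fun _ => isCompact_Icc).image (PiLp.continuous_toLp 2 _)

lemma sphere_subset_iUnion_cubeFace :
    sphere (0 : EuclideanSpace ℝ (Fin (n+1))) 1 ⊆ ⋃ i, ⋃ s ∈ ({1, -1} : Finset ℝ),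
      (fun x => ‖x‖⁻¹ • x) '' (cubeFace i s '' unitCube n) := by
  intro x hx
  rw [mem_sphere_zero_iff_norm] at hx
  obtain ⟨i, -, hi⟩ := Finset.exists_max_image Finset.univ (fun j => |x j|) Finset.univ_nonempty
  have hxi : 0 < |x i| := by
    refine lt_of_le_of_ne (abs_nonneg _) fun h => ?_
    have : x = 0 := by
      ext j
      simpa [← h] using hi j (Finset.mem_univ j)
    simp [this] at hx
  set c := |x i|⁻¹
  have hc : 0 < c := inv_pos.2 hxi
  have hsign : c * x i ∈ ({1, -1} : Finset ℝ) := by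
    rcases abs_choice (x i) with h | h <;> simp [c, h, abs_pos.1 hxi]
  simp only [Set.mem_iUnion]
  refine ⟨i, c * x i, hsign, c • x,
    ⟨WithLp.toLp 2 (i.removeNth (WithLp.ofLp (c • x))), ?_, ?_⟩, ?_⟩
  · refine ⟨_, fun j _ => ?_, rfl⟩
    rw [Set.mem_Icc, ← abs_le]
    calc |c * x (i.succAbove j)| = c * |x (i.succAbove j)| := by rw [abs_mul, abs_of_pos hc]
      _ ≤ c * |x i| := mul_le_mul_of_nonneg_left (hi _ (Finset.mem_univ _)) hc.le
      _ = 1 := inv_mul_cancel₀ hxi.ne'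
  · rw [cubeFace, show c * x i = WithLp.ofLp (c • x) i from rfl, Fin.insertNth_self_removeNth]
  · change ‖c • x‖⁻¹ • c • x = x
    rw [norm_smul, hx, Real.norm_of_nonneg hc.le, mul_one, smul_smul, inv_mul_cancel₀ hc.ne',
      one_smul]

lemma hausdorffMeasure_image_cubeFace_lt_top (i : Fin (n+1)) {s : ℝ} (hs : 1 ≤ |s|) :
    μH[n] ((fun x => ‖x‖⁻¹ • x) '' (cubeFace i s '' unitCube n)) < ∞ := by
  have hn : (0 : ℝ) ≤ n := n.cast_nonneg
  have hface : cubeFace i s '' unitCube n ⊆ {x | 1 ≤ ‖x‖} := by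
    rintro _ ⟨v, -, rfl⟩
    exact one_le_norm_cubeFace i hs v
  calc _ ≤ ((2 : ℝ≥0) : ℝ≥0∞) ^ (n : ℝ) * μH[n] (cubeFace i s '' unitCube n) :=
        ((lipschitzOnWith_inv_norm_smul _).mono hface).hausdorffMeasure_image_le hn
    _ = ((2 : ℝ≥0) : ℝ≥0∞) ^ (n : ℝ) * μH[n] (unitCube n) := by
        rw [(isometry_cubeFace i s).hausdorffMeasure_image (Or.inl hn)]
    _ < ∞ := ENNReal.mul_lt_top (ENNReal.rpow_lt_top_of_nonneg hn ENNReal.coe_ne_top)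
        (isCompact_unitCube n).measure_lt_top

end CubeFaces

lemma hausdorffMeasure_sphere_lt_top (n : ℕ) :
    μH[n] (sphere (0 : EuclideanSpace ℝ (Fin (n+1))) 1) < ∞ := by
  refine (measure_mono sphere_subset_iUnion_cubeFace).trans_lt <|
    (measure_iUnion_fintype_le _ _).trans_lt <| ENNReal.sum_lt_top.2 fun i _ => ?_
  refine (measure_biUnion_finset_le _ _).trans_lt <| ENNReal.sum_lt_top.2 fun s hs => ?_
  refine hausdorffMeasure_image_cubeFace_lt_top i ?_
  rcases Finset.mem_insert.1 hs with rfl | hs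
  · simp
  · simp [Finset.mem_singleton.1 hs]

instance isFiniteMeasure_sphMeasure (n : ℕ) : IsFiniteMeasure (sphMeasure n) :=
  ⟨by rw [sphMeasure, Measure.restrict_apply_univ]; exact hausdorffMeasure_sphere_lt_top n⟩

lemma tendsto_pow_mul_rpow_atTop_nhds_zero (n : ℕ) {θ p : ℝ} (hθ0 : 0 < θ) (hθ1 : θ < 1)
    (hp : 0 < p) (c : ℝ) :
    Tendsto (fun t : ℝ => t ^ n * θ ^ (t * p - c)) atTop (𝓝 0) := by
  have hb : 0 < -(p * Real.log θ) := neg_pos.2 (mul_neg_of_pos_of_neg hp (Real.log_neg hθ0 hθ1))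
  have h := ((isLittleO_pow_exp_pos_mul_atTop n hb).tendsto_div_nhds_zero).const_mul
    (θ ^ (-c))
  rw [mul_zero] at h
  refine h.congr fun t => ?_
  rw [Real.rpow_def_of_pos hθ0, Real.rpow_def_of_pos hθ0, div_eq_mul_inv, ← Real.exp_neg,
    ← mul_assoc, mul_comm _ (t ^ n), mul_assoc, ← Real.exp_add]
  ring_nf

lemma norm_integral_setIntegral_le {X Y G : Type*} [MeasurableSpace X] [MeasurableSpace Y]
    [NormedAddCommGroup G] [NormedSpace ℝ G] {μ : Measure X} {ν : Measure Y}
    [IsFiniteMeasure μ] [IsFiniteMeasure ν] {s : X → Set Y} {f : X → Y → G} {B : ℝ} (hB : 0 ≤ B)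
    (hf : ∀ᵐ x ∂μ, ∀ᵐ y ∂ν.restrict (s x), ‖f x y‖ ≤ B) :
    ‖∫ x, ∫ y in s x, f x y ∂ν ∂μ‖ ≤ B * ν.real Set.univ * μ.real Set.univ := by
  refine norm_integral_le_of_norm_le_const (hf.mono fun x hx => ?_)
  calc ‖∫ y in s x, f x y ∂ν‖ ≤ B * (ν.restrict (s x)).real Set.univ :=
        norm_integral_le_of_norm_le_const hx
    _ ≤ B * ν.real Set.univ := by
        rw [measureReal_restrict_apply_univ]
        exact mul_le_mul_of_nonneg_left (measureReal_mono (Set.subset_univ _)) hB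

lemma measurableSet_Sph (n : ℕ) : MeasurableSet (Sph n) :=
  isClosed_sphere.measurableSet

lemma measurableSet_sphCap {n : ℕ} (v : EuclideanSpace ℝ (Fin (n+1))) (r : ℝ) :
    MeasurableSet (sphCap v r) :=
  (measurableSet_Sph n).inter <| measurableSet_lt
    (Real.continuous_arccos.comp (continuous_const.inner continuous_id)).measurable measurable_const

lemma nGeoDist_le_of_notMem_sphCap {n : ℕ} {x y : EuclideanSpace ℝ (Fin (n+1))} {δ : ℝ}
    (hy : y ∈ Sph n) (hyδ : y ∉ sphCap (-x) δ) : nGeoDist x y ≤ 1 - δ / Real.pi := by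
  have hδ : δ ≤ Real.pi - geoDist x y := by
    simpa [sphCap, hy, geoDist, inner_neg_left, Real.arccos_neg] using hyδ
  rw [nGeoDist, one_sub_div Real.pi_pos.ne']
  exact div_le_div_of_nonneg_right (by linarith) Real.pi_pos.le

lemma norm_div_nGeoDist_rpow_le {n : ℕ} {x y : EuclideanSpace ℝ (Fin (n+1))} {δ a C m s : ℝ}
    (hy : y ∈ Sph n) (hyδ : y ∉ sphCap (-x) δ) (hms : m ≤ s) (ha : ‖a‖ ≤ C) :
    ‖a / nGeoDist x y ^ (m - s)‖ ≤ C * (1 - δ / Real.pi) ^ (s - m) := by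
  have hd0 : 0 ≤ nGeoDist x y := div_nonneg (Real.arccos_nonneg _) Real.pi_pos.le
  rw [div_eq_mul_inv, ← Real.rpow_neg hd0, neg_sub, norm_mul,
    Real.norm_of_nonneg (Real.rpow_nonneg hd0 _)]
  exact mul_le_mul ha
    (Real.rpow_le_rpow hd0 (nGeoDist_le_of_notMem_sphCap hy hyδ) (sub_nonneg.2 hms))
    (Real.rpow_nonneg hd0 _) ((norm_nonneg a).trans ha)

theorem tendsto_integral_compl_sphCap (n : ℕ) {p : ℝ} (hp : 0 < p)
    {F : EuclideanSpace ℝ (Fin (n+1)) → EuclideanSpace ℝ (Fin (n+1)) → ℝ}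
    (hF : Continuous (Function.uncurry F)) {δ : ℝ} (hδ : 0 < δ) (hδπ : δ < Real.pi) :
    Tendsto (fun t : ℝ => t ^ n * ∫ x, (∫ y in Sph n \ sphCap (-x) δ,
        F x y / nGeoDist x y ^ ((n : ℝ) - t * p) ∂(sphMeasure n)) ∂(sphMeasure n))
      atTop (𝓝 0) := by
  obtain ⟨C, hC⟩ := ((isCompact_sphere (0 : EuclideanSpace ℝ (Fin (n+1))) 1).prod
    (isCompact_sphere 0 1)).exists_bound_of_continuousOn hF.continuousOn
  set θ := 1 - δ / Real.pi
  have hθ0 : 0 < θ := sub_pos.2 ((div_lt_one Real.pi_pos).2 hδπ)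
  have hθ1 : θ < 1 := sub_lt_self 1 (div_pos hδ Real.pi_pos)
  set B := max C 0 * (sphMeasure n).real Set.univ * (sphMeasure n).real Set.univ
  have hbound : ∀ᶠ t in atTop, ‖t ^ n * ∫ x, (∫ y in Sph n \ sphCap (-x) δ,
      F x y / nGeoDist x y ^ ((n : ℝ) - t * p) ∂(sphMeasure n)) ∂(sphMeasure n)‖ ≤
      B * (t ^ n * θ ^ (t * p - n)) := by
    filter_upwards [eventually_ge_atTop (n / p)] with t ht
    have ht0 : 0 ≤ t := (div_nonneg n.cast_nonneg hp.le).trans ht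
    have hnt : (n : ℝ) ≤ t * p := (div_le_iff₀ hp).1 ht
    have hkernel : ∀ᵐ x ∂sphMeasure n, ∀ᵐ y ∂(sphMeasure n).restrict (Sph n \ sphCap (-x) δ),
        ‖F x y / nGeoDist x y ^ ((n : ℝ) - t * p)‖ ≤ max C 0 * θ ^ (t * p - n) := by
      filter_upwards [ae_restrict_mem (measurableSet_Sph n)] with x hx
      filter_upwards [ae_restrict_mem ((measurableSet_Sph n).diff (measurableSet_sphCap _ _))]
        with y ⟨hy, hyδ⟩
      exact norm_div_nGeoDist_rpow_le hy hyδ hnt ((hC (x, y) ⟨hx, hy⟩).trans (le_max_left _ _))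
    rw [norm_mul, norm_pow, Real.norm_of_nonneg ht0]
    calc t ^ n * ‖∫ x, (∫ y in Sph n \ sphCap (-x) δ,
          F x y / nGeoDist x y ^ ((n : ℝ) - t * p) ∂(sphMeasure n)) ∂(sphMeasure n)‖
        ≤ t ^ n * (max C 0 * θ ^ (t * p - n) * (sphMeasure n).real Set.univ *
            (sphMeasure n).real Set.univ) := by
          gcongr
          exact norm_integral_setIntegral_le
            (mul_nonneg (le_max_right _ _) (Real.rpow_nonneg hθ0.le _)) hkernel
      _ = B * (t ^ n * θ ^ (t * p - n)) := by ring
  refine squeeze_zero_norm' hbound ?_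
  simpa using (tendsto_pow_mul_rpow_atTop_nhds_zero n hθ0 hθ1 hp n).const_mul B

theorem concentration_at_antipode_general (n : ℕ) (p : ℝ) (hp : 1 ≤ p)
    (g : EuclideanSpace ℝ (Fin (n+1)) → ℝ) (hg : Continuous g)
    (δ : ℝ) (hδ : 0 < δ) (hδπ : δ < Real.pi) :
    Tendsto (fun t : ℝ => t ^ n *
        ∫ x, (∫ y in Sph n \ sphCap (-x) δ, |g x - g (-x)| ^ p / nGeoDist x y ^ ((n : ℝ) - t * p)
          ∂(sphMeasure n)) ∂(sphMeasure n))
      atTop (𝓝 0) ∧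
    Tendsto (fun t : ℝ => t ^ n *
        ∫ x, (∫ y in Sph n \ sphCap (-x) δ, |g x - g y| ^ p / nGeoDist x y ^ ((n : ℝ) - t * p)
          ∂(sphMeasure n)) ∂(sphMeasure n))
      atTop (𝓝 0) := by
  have hp0 : 0 < p := one_pos.trans_le hp
  have hpow : Continuous fun a : ℝ => |a| ^ p := continuous_abs.rpow_const fun _ => Or.inr hp0.le
  refine ⟨tendsto_integral_compl_sphCap n hp0 ?_ hδ hδπ,
    tendsto_integral_compl_sphCap n hp0 ?_ hδ hδπ⟩
  · exact hpow.comp ((hg.comp continuous_fst).sub (hg.comp continuous_fst.neg))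
  · exact hpow.comp ((hg.comp continuous_fst).sub (hg.comp continuous_snd))

/-- Concentration at the antipode: for continuous `g : S^n → ℝ` and `0 < δ < π`, the
contribution of `S^n \ C(−x,δ)` to the inner integrals vanishes in the limit `t → ∞`:
`lim_{t→∞} tⁿ ∫_{S^n} ∫_{S^n \ C(−x,δ)} |g(x)−g(−x)|^p / d̃(x,y)^{n−tp} dH^n(y) dH^n(x) = 0`
and
`lim_{t→∞} tⁿ ∫_{S^n} ∫_{S^n \ C(−x,δ)} |g(x)−g(y)|^p / d̃(x,y)^{n−tp} dH^n(y) dH^n(x) = 0`. -/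
theorem concentration_at_antipode (n : ℕ) (hn : 1 ≤ n) (p : ℝ) (hp : 1 ≤ p)
    (g : EuclideanSpace ℝ (Fin (n+1)) → ℝ) (hg : Continuous g)
    (δ : ℝ) (hδ : 0 < δ) (hδπ : δ < Real.pi) :
    Tendsto (fun t : ℝ => t ^ n *
        ∫ x, (∫ y in Sph n \ sphCap (-x) δ, |g x - g (-x)| ^ p / nGeoDist x y ^ ((n : ℝ) - t * p)
          ∂(sphMeasure n)) ∂(sphMeasure n))
      atTop (𝓝 0) ∧
    Tendsto (fun t : ℝ => t ^ n *
        ∫ x, (∫ y in Sph n \ sphCap (-x) δ, |g x - g y| ^ p / nGeoDist x y ^ ((n : ℝ) - t * p)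
          ∂(sphMeasure n)) ∂(sphMeasure n))
      atTop (𝓝 0) :=
  concentration_at_antipode_general n p hp g hg δ hδ hδπ
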